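/- Let n ≥ 1 and k ≥ 1 be integers and let L be a real linear functional on the space of real polynomials in n variables of degree at most 2k such that L(1) = 1, L(σ²) ≥ 0 for every polynomial σ of degree at most k, and L((1 − ∑_{i=1}^n x_i²) · σ²) ≥ 0 for every polynomial σ of degree at most k − 1. Then for every i = 1, …, n and every integer t with 1 ≤ t ≤ k, one has 0 ≤ L(x_i^{2t}) ≤ 1; in particular ∑_{j=1}^n L(x_j²) ≤ 1. -/

import Mathlib

open MvPolynomial

/-- If `L` is a linear functional on real polynomials in `n` variables
with `L(1) = 1`, `L(σ²) ≥ 0` for all `σ` of degree at most `k`, and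
`L((1 − ∑ xᵢ²)·σ²) ≥ 0` for all `σ` of degree at most `k − 1`, then
`0 ≤ L(xᵢ^{2t}) ≤ 1` for all `i` and all `1 ≤ t ≤ k`; in particular `∑ⱼ L(xⱼ²) ≤ 1`. -/
theorem moment_bounds_from_ball_constraint
    (n k : ℕ) (hn : 1 ≤ n) (hk : 1 ≤ k)
    (L : MvPolynomial (Fin n) ℝ →ₗ[ℝ] ℝ)
    (hL1 : L 1 = 1)
    (hLsq : ∀ σ : MvPolynomial (Fin n) ℝ, σ.totalDegree ≤ k → 0 ≤ L (σ ^ 2))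
    (hLball : ∀ σ : MvPolynomial (Fin n) ℝ, σ.totalDegree ≤ k - 1 →
      0 ≤ L ((1 - ∑ i : Fin n, MvPolynomial.X i ^ 2) * σ ^ 2)) :
    (∀ (i : Fin n) (t : ℕ), 1 ≤ t → t ≤ k →
      0 ≤ L (MvPolynomial.X i ^ (2 * t)) ∧ L (MvPolynomial.X i ^ (2 * t)) ≤ 1) ∧
    (∑ j : Fin n, L (MvPolynomial.X j ^ 2)) ≤ 1 := by
  -- step lemma: monotone decrease of even moments
  have step : ∀ (i : Fin n) (s : ℕ), s + 1 ≤ k →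
      L (MvPolynomial.X i ^ (2 * (s + 1))) ≤ L (MvPolynomial.X i ^ (2 * s)) := by
    intro i s hs
    have hdeg : (MvPolynomial.X (R := ℝ) i ^ s).totalDegree ≤ k - 1 := by
      rw [MvPolynomial.totalDegree_X_pow]
      omega
    have hball := hLball (MvPolynomial.X i ^ s) hdeg
    have expand : (1 - ∑ j : Fin n, MvPolynomial.X (R := ℝ) j ^ 2) *
        (MvPolynomial.X i ^ s) ^ 2 =
        (MvPolynomial.X i ^ s) ^ 2 - ∑ j : Fin n,
          (MvPolynomial.X j * MvPolynomial.X i ^ s) ^ 2 := by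
      rw [sub_mul, one_mul, Finset.sum_mul]
      apply congrArg (HSub.hSub _)
      exact Finset.sum_congr rfl fun j _ => (mul_pow _ _ _).symm
    rw [expand, map_sub, map_sum, sub_nonneg] at hball
    have hterm : ∀ j : Fin n, 0 ≤ L ((MvPolynomial.X j * MvPolynomial.X i ^ s) ^ 2) := by
      intro j
      apply hLsq
      refine le_trans (MvPolynomial.totalDegree_mul _ _) ?_
      rw [MvPolynomial.totalDegree_X, MvPolynomial.totalDegree_X_pow]
      omega
    have hsingle : L ((MvPolynomial.X i * MvPolynomial.X i ^ s) ^ 2) ≤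
        ∑ j : Fin n, L ((MvPolynomial.X j * MvPolynomial.X i ^ s) ^ 2) :=
      Finset.single_le_sum (fun j _ => hterm j) (Finset.mem_univ i)
    have heq : (MvPolynomial.X (R := ℝ) i * MvPolynomial.X i ^ s) ^ 2 =
        MvPolynomial.X i ^ (2 * (s + 1)) := by
      have h1 : MvPolynomial.X (R := ℝ) i * MvPolynomial.X i ^ s =
          MvPolynomial.X i ^ (s + 1) := (pow_succ' _ _).symm
      rw [h1, mul_comm 2 (s + 1), pow_mul]
    rw [heq] at hsingle
    have h2s : MvPolynomial.X (R := ℝ) i ^ (2 * s) = (MvPolynomial.X i ^ s) ^ 2 := by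
      rw [mul_comm, pow_mul]
    rw [h2s]
    exact le_trans hsingle hball
  -- upper bound by induction
  have upper : ∀ (i : Fin n) (t : ℕ), t ≤ k → L (MvPolynomial.X i ^ (2 * t)) ≤ 1 := by
    intro i t
    induction t with
    | zero => intro _; simp [hL1]
    | succ s ih =>
      intro hs
      exact le_trans (step i s hs) (ih (by omega))
  constructor
  · intro i t ht1 htk
    refine ⟨?_, upper i t htk⟩
    have : MvPolynomial.X (R := ℝ) i ^ (2 * t) = (MvPolynomial.X i ^ t) ^ 2 := by
      rw [mul_comm, pow_mul]
    rw [this]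
    apply hLsq
    rw [MvPolynomial.totalDegree_X_pow]
    exact htk
  · have hdeg : (1 : MvPolynomial (Fin n) ℝ).totalDegree ≤ k - 1 := by
      simp
    have hball := hLball 1 hdeg
    have expand : (1 - ∑ j : Fin n, MvPolynomial.X (R := ℝ) j ^ 2) * 1 ^ 2 =
        1 - ∑ j : Fin n, MvPolynomial.X j ^ 2 := by ring
    rw [expand, map_sub, map_sum, hL1, sub_nonneg] at hball
    exact hball
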